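/- (Lemma 2(ii): dual strong convexity from full row rank.) Assume f1: ℝ^{dx} → ℝ is μx-strongly convex and Lx-smooth (Lx ≥ μx > 0), g1: ℝ^{dy} → ℝ is convex and differentiable, f2 = 0, and B ∈ ℝ^{dy×dx} has full row rank with smallest singular value σmin(B) > 0. For y ∈ ℝ^{dy}, let x*(y) denote the unique minimizer over x of f1(x) + ⟨Bᵀy, x⟩, and define G(y) = ∇g1(y) − B x*(y). Then ⟨G(y) − G(y'), y − y'⟩ ≥ (σmin(B)²/Lx)‖y − y'‖² for all y, y' ∈ ℝ^{dy} (i.e., the dual function φ is (σmin(B)²/Lx)-strongly convex). -/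

import Mathlib

open scoped RealInnerProductSpace
open Matrix

/-- Action of a matrix on Euclidean space. -/
noncomputable def mulE {m n : ℕ} (B : Matrix (Fin m) (Fin n) ℝ)
    (x : EuclideanSpace ℝ (Fin n)) : EuclideanSpace ℝ (Fin m) :=
  Matrix.toEuclideanLin B x

/-- Largest singular value (operator norm) of a matrix. -/
noncomputable def sigmaMax {m n : ℕ} (B : Matrix (Fin m) (Fin n) ℝ) : ℝ :=
  ‖LinearMap.toContinuousLinearMap (Matrix.toEuclideanLin B)‖

/-- Largest eigenvalue of a symmetric matrix (Rayleigh quotient formulation). -/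
noncomputable def lambdaMax {n : ℕ} (P : Matrix (Fin n) (Fin n) ℝ) : ℝ :=
  ⨆ v : Metric.sphere (0 : EuclideanSpace ℝ (Fin n)) 1,
    ⟪mulE P (v : EuclideanSpace ℝ (Fin n)), (v : EuclideanSpace ℝ (Fin n))⟫

/-- Smallest eigenvalue of a symmetric matrix (Rayleigh quotient formulation). -/
noncomputable def lambdaMin {n : ℕ} (P : Matrix (Fin n) (Fin n) ℝ) : ℝ :=
  ⨅ v : Metric.sphere (0 : EuclideanSpace ℝ (Fin n)) 1,
    ⟪mulE P (v : EuclideanSpace ℝ (Fin n)), (v : EuclideanSpace ℝ (Fin n))⟫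

/-- `f` is `μ`-strongly convex: `f - μ/2 ‖·‖²` is convex. -/
def StrongConvex {n : ℕ} (μ : ℝ) (f : EuclideanSpace ℝ (Fin n) → ℝ) : Prop :=
  ConvexOn ℝ Set.univ fun x => f x - μ / 2 * ‖x‖ ^ 2

/-- A function with values in `ℝ ∪ {+∞}` (modelled by `EReal`) is proper. -/
def ProperER {n : ℕ} (f : EuclideanSpace ℝ (Fin n) → EReal) : Prop :=
  (∀ x, f x ≠ ⊥) ∧ ∃ x, f x ≠ ⊤

/-- Convexity for `EReal`-valued functions. -/
def ConvexER {n : ℕ} (f : EuclideanSpace ℝ (Fin n) → EReal) : Prop :=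
  ∀ x y : EuclideanSpace ℝ (Fin n), ∀ a b : ℝ, 0 ≤ a → 0 ≤ b → a + b = 1 →
    f (a • x + b • y) ≤ (a : EReal) * f x + (b : EReal) * f y

/-- `s` is a subgradient of the `EReal`-valued convex function `f` at `x`. -/
def IsSubgradAt {n : ℕ} (f : EuclideanSpace ℝ (Fin n) → EReal)
    (x s : EuclideanSpace ℝ (Fin n)) : Prop :=
  ∀ z, f x + ((⟪s, z - x⟫ : ℝ) : EReal) ≤ f z

/-- `p` is the proximal point `prox_{t g}(w)`, i.e. it minimizes `g(·) + 1/(2t)‖· - w‖²`. -/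
def IsProx {n : ℕ} (g : EuclideanSpace ℝ (Fin n) → EReal) (t : ℝ)
    (w p : EuclideanSpace ℝ (Fin n)) : Prop :=
  ∀ z, g p + ((1 / (2 * t) * ‖p - w‖ ^ 2 : ℝ) : EReal)
      ≤ g z + ((1 / (2 * t) * ‖z - w‖ ^ 2 : ℝ) : EReal)

/-- Smallest singular value of `B ∈ ℝ^{m×n}` (as a map `ℝⁿ → ℝᵐ`), i.e. the minimum of
`‖Bᵀv‖` over unit vectors `v ∈ ℝᵐ`; it is positive iff `B` has full row rank. -/
noncomputable def sigmaMin {m n : ℕ} (B : Matrix (Fin m) (Fin n) ℝ) : ℝ :=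
  ⨅ v : Metric.sphere (0 : EuclideanSpace ℝ (Fin m)) 1,
    ‖mulE Bᵀ (v : EuclideanSpace ℝ (Fin m))‖

/-!
The minimizer is characterized by `∇f₁(x*(y)) = -Bᵀy`, so `Bᵀ(y - y') = ∇f₁(x*(y')) - ∇f₁(x*(y))`
and `⟪B x*(y') - B x*(y), y - y'⟫ = ⟪∇f₁(x*(y')) - ∇f₁(x*(y)), x*(y') - x*(y)⟫`.
Cocoercivity of `∇f₁` bounds this from below by `‖Bᵀ(y - y')‖² / L ≥ σ_min(B)² ‖y - y'‖² / L`,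
and monotonicity of `∇g₁` takes care of the remaining term.
-/
section Gradient

open Set

variable {E : Type*} [NormedAddCommGroup E] [InnerProductSpace ℝ E] [CompleteSpace E]
  {f : E → ℝ} {f' : E → E} {L : ℝ}

theorem HasGradientAt.add_inner_const {g x : E} (hf : HasGradientAt f g x) (c : E) :
    HasGradientAt (fun z => f z + ⟪c, z⟫) (g + c) x := by
  rw [hasGradientAt_iff_hasFDerivAt, map_add]
  exact hf.hasFDerivAt.add (InnerProductSpace.toDual ℝ E c).hasFDerivAt

theorem IsLocalMin.hasGradientAt_eq_zero {g x : E} (h : IsLocalMin f x)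
    (hf : HasGradientAt f g x) : g = 0 :=
  (InnerProductSpace.toDual ℝ E).map_eq_zero_iff.1 (h.hasFDerivAt_eq_zero hf.hasFDerivAt)

theorem HasGradientAt.hasDerivAt_comp_add_smul {g x v : E} {t : ℝ}
    (hf : HasGradientAt f g (x + t • v)) :
    HasDerivAt (fun s : ℝ => f (x + s • v)) ⟪g, v⟫ t := by
  have hline : HasDerivAt (fun s : ℝ => x + s • v) v t := by
    simpa using ((hasDerivAt_id t).smul_const v).const_add x
  simpa [Function.comp_def] using hf.hasFDerivAt.comp_hasDerivAt t hline

theorem ConvexOn.add_inner_sub_le_of_hasGradientAt {g x : E} (hconv : ConvexOn ℝ univ f)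
    (hf : HasGradientAt f g x) (y : E) : f x + ⟪g, y - x⟫ ≤ f y := by
  have hline : ConvexOn ℝ univ (fun s : ℝ => f (x + s • (y - x))) := by
    simpa [Function.comp_def, AffineMap.lineMap_apply, add_comm]
      using hconv.comp_affineMap (AffineMap.lineMap x y : ℝ →ᵃ[ℝ] E)
  have hd : HasDerivAt (fun s : ℝ => f (x + s • (y - x))) ⟪g, y - x⟫ 0 :=
    HasGradientAt.hasDerivAt_comp_add_smul (by simpa using hf)
  have := hline.le_slope_of_hasDerivAt (mem_univ 0) (mem_univ 1) zero_lt_one hd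
  simp only [slope, sub_zero, inv_one, one_smul, zero_smul, add_zero, vsub_eq_sub,
    add_sub_cancel, smul_eq_mul, one_mul] at this
  linarith

theorem ConvexOn.inner_sub_nonneg_of_hasGradientAt {g g' x y : E} (hconv : ConvexOn ℝ univ f)
    (hx : HasGradientAt f g x) (hy : HasGradientAt f g' y) : 0 ≤ ⟪g - g', x - y⟫ := by
  have hxy := hconv.add_inner_sub_le_of_hasGradientAt hx y
  have hyx := hconv.add_inner_sub_le_of_hasGradientAt hy x
  rw [← neg_sub x y, inner_neg_right] at hxy
  rw [inner_sub_left]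
  linarith

theorem le_add_inner_sub_add_sq_of_lipschitz_gradient (hf : ∀ p, HasGradientAt f (f' p) p)
    (hlip : ∀ a b, ‖f' a - f' b‖ ≤ L * ‖a - b‖) (x y : E) :
    f y ≤ f x + ⟪f' x, y - x⟫ + L / 2 * ‖y - x‖ ^ 2 := by
  set v := y - x
  let φ : ℝ → ℝ := fun t => f (x + t • v) - t * ⟪f' x, v⟫ - L / 2 * t ^ 2 * ‖v‖ ^ 2
  have hφ : ∀ t, HasDerivAt φ (⟪f' (x + t • v) - f' x, v⟫ - L * t * ‖v‖ ^ 2) t := by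
    intro t
    have := ((hf (x + t • v)).hasDerivAt_comp_add_smul.sub
      ((hasDerivAt_id t).mul_const ⟪f' x, v⟫)).sub
        (((hasDerivAt_pow 2 t).const_mul (L / 2)).mul_const (‖v‖ ^ 2))
    exact this.congr_deriv (by rw [inner_sub_left]; ring)
  have hanti : AntitoneOn φ (Icc 0 1) := by
    refine antitoneOn_of_hasDerivWithinAt_nonpos (convex_Icc 0 1)
      (fun t _ => (hφ t).continuousAt.continuousWithinAt) (fun t _ => (hφ t).hasDerivWithinAt) ?_
    intro t ht
    rw [interior_Icc] at ht
    have : ⟪f' (x + t • v) - f' x, v⟫ ≤ L * t * ‖v‖ ^ 2 := calc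
      _ ≤ ‖f' (x + t • v) - f' x‖ * ‖v‖ := real_inner_le_norm _ _
      _ ≤ L * ‖t • v‖ * ‖v‖ := by gcongr; simpa using hlip (x + t • v) x
      _ = _ := by rw [norm_smul, Real.norm_of_nonneg ht.1.le]; ring
    linarith
  have h01 : φ 1 ≤ φ 0 :=
    hanti (left_mem_Icc.2 zero_le_one) (right_mem_Icc.2 zero_le_one) zero_le_one
  have hφ1 : φ 1 = f y - ⟪f' x, v⟫ - L / 2 * ‖v‖ ^ 2 := by simp [φ, v]
  have hφ0 : φ 0 = f x := by simp [φ]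
  linarith

theorem apply_sub_inv_smul_gradient_le (hL : 0 < L) (hf : ∀ p, HasGradientAt f (f' p) p)
    (hlip : ∀ a b, ‖f' a - f' b‖ ≤ L * ‖a - b‖) (x : E) :
    f (x - L⁻¹ • f' x) ≤ f x - (2 * L)⁻¹ * ‖f' x‖ ^ 2 := by
  have := le_add_inner_sub_add_sq_of_lipschitz_gradient hf hlip x (x - L⁻¹ • f' x)
  rw [sub_sub_cancel_left, inner_neg_right, norm_neg, real_inner_smul_right,
    real_inner_self_eq_norm_sq, norm_smul, Real.norm_of_nonneg (inv_nonneg.2 hL.le)] at this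
  convert this using 1
  field_simp
  ring

theorem ConvexOn.add_inner_add_sq_norm_gradient_sub_le (hL : 0 < L) (hconv : ConvexOn ℝ univ f)
    (hf : ∀ p, HasGradientAt f (f' p) p) (hlip : ∀ a b, ‖f' a - f' b‖ ≤ L * ‖a - b‖) (a b : E) :
    f a + ⟪f' a, b - a⟫ + (2 * L)⁻¹ * ‖f' b - f' a‖ ^ 2 ≤ f b := by
  -- `h` is convex and `L`-smooth with `∇h a = 0`, so `h a` lies below the value after one
  -- gradient step from `b`, which is at most `h b - ‖∇h b‖² / (2L)`.
  let h : E → ℝ := fun z => f z + ⟪-f' a, z⟫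
  have hh : ∀ p, HasGradientAt h (f' p + -f' a) p := fun p => (hf p).add_inner_const _
  have hlip' : ∀ p q, ‖(f' p + -f' a) - (f' q + -f' a)‖ ≤ L * ‖p - q‖ := by simpa using hlip
  have hmin : h a ≤ h (b - L⁻¹ • (f' b + -f' a)) := by
    have := hconv.add_inner_sub_le_of_hasGradientAt (hf a) (b - L⁻¹ • (f' b + -f' a))
    simp only [h, inner_neg_left, inner_sub_right] at this ⊢
    linarith
  have hdec := apply_sub_inv_smul_gradient_le hL hh hlip' b
  simp only [h, inner_neg_left, inner_sub_right, ← sub_eq_add_neg] at hmin hdec ⊢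
  linarith

theorem ConvexOn.inv_mul_sq_norm_gradient_sub_le_inner (hL : 0 < L) (hconv : ConvexOn ℝ univ f)
    (hf : ∀ p, HasGradientAt f (f' p) p) (hlip : ∀ a b, ‖f' a - f' b‖ ≤ L * ‖a - b‖) (x y : E) :
    L⁻¹ * ‖f' x - f' y‖ ^ 2 ≤ ⟪f' x - f' y, x - y⟫ := by
  have hxy := hconv.add_inner_add_sq_norm_gradient_sub_le hL hf hlip x y
  have hyx := hconv.add_inner_add_sq_norm_gradient_sub_le hL hf hlip y x
  rw [norm_sub_rev, ← neg_sub x y, inner_neg_right] at hxy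
  rw [inner_sub_left]
  have : L⁻¹ * ‖f' x - f' y‖ ^ 2 = 2 * ((2 * L)⁻¹ * ‖f' x - f' y‖ ^ 2) := by ring
  linarith

end Gradient

section SingularValue

variable {m n : ℕ} (B : Matrix (Fin m) (Fin n) ℝ)

theorem mulE_sub (x y : EuclideanSpace ℝ (Fin n)) : mulE B (x - y) = mulE B x - mulE B y :=
  map_sub _ x y

theorem inner_mulE_transpose (y : EuclideanSpace ℝ (Fin m)) (x : EuclideanSpace ℝ (Fin n)) :
    ⟪mulE Bᵀ y, x⟫ = ⟪y, mulE B x⟫ := by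
  rw [mulE, ← conjTranspose_eq_transpose_of_trivial, toEuclideanLin_conjTranspose_eq_adjoint]
  exact LinearMap.adjoint_inner_left _ _ _

theorem sigmaMin_nonneg : 0 ≤ sigmaMin B :=
  Real.iInf_nonneg fun _ => norm_nonneg _

theorem sigmaMin_mul_norm_le (v : EuclideanSpace ℝ (Fin m)) : sigmaMin B * ‖v‖ ≤ ‖mulE Bᵀ v‖ := by
  rcases eq_or_ne v 0 with rfl | hv
  · simp [mulE]
  have hnv : 0 < ‖v‖ := norm_pos_iff.mpr hv
  have hu : ‖v‖⁻¹ • v ∈ Metric.sphere (0 : EuclideanSpace ℝ (Fin m)) 1 := by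
    rw [mem_sphere_zero_iff_norm, norm_smul, norm_inv, norm_norm, inv_mul_cancel₀ hnv.ne']
  have hbdd : BddBelow (Set.range fun w : Metric.sphere (0 : EuclideanSpace ℝ (Fin m)) 1 =>
      ‖mulE Bᵀ (w : EuclideanSpace ℝ (Fin m))‖) :=
    ⟨0, by rintro _ ⟨w, rfl⟩; exact norm_nonneg _⟩
  have hle : sigmaMin B ≤ ‖mulE Bᵀ (‖v‖⁻¹ • v)‖ := ciInf_le hbdd ⟨_, hu⟩
  rw [mulE, map_smul, norm_smul, norm_inv, norm_norm, ← mulE] at hle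
  rwa [← le_div_iff₀ hnv, div_eq_inv_mul]

end SingularValue

theorem dual_strongly_monotone_of_full_row_rank_general {dx dy : ℕ} (μx Lx : ℝ)
    (hμx : 0 < μx) (hLx : μx ≤ Lx)
    (f1 : EuclideanSpace ℝ (Fin dx) → ℝ)
    (f1' : EuclideanSpace ℝ (Fin dx) → EuclideanSpace ℝ (Fin dx))
    (hf1grad : ∀ x, HasGradientAt f1 (f1' x) x)
    (hf1sc : StrongConvex μx f1)
    (hf1sm : ∀ x x', ‖f1' x - f1' x'‖ ≤ Lx * ‖x - x'‖)
    (g1 : EuclideanSpace ℝ (Fin dy) → ℝ)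
    (g1' : EuclideanSpace ℝ (Fin dy) → EuclideanSpace ℝ (Fin dy))
    (hg1grad : ∀ y, HasGradientAt g1 (g1' y) y)
    (hg1conv : ConvexOn ℝ Set.univ g1)
    (B : Matrix (Fin dy) (Fin dx) ℝ)
    (xstar : EuclideanSpace ℝ (Fin dy) → EuclideanSpace ℝ (Fin dx))
    (hxstar : ∀ y x, f1 (xstar y) + ⟪mulE Bᵀ y, xstar y⟫ ≤ f1 x + ⟪mulE Bᵀ y, x⟫) :
    ∀ y y' : EuclideanSpace ℝ (Fin dy),
      (sigmaMin B ^ 2 / Lx) * ‖y - y'‖ ^ 2 ≤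
        ⟪(g1' y - mulE B (xstar y)) - (g1' y' - mulE B (xstar y')), y - y'⟫ := by
  intro y y'
  have hL : 0 < Lx := hμx.trans_le hLx
  have hf1conv : ConvexOn ℝ Set.univ f1 :=
    strongConvexOn_zero.1 ((strongConvexOn_iff_convex.2 hf1sc).mono hμx.le)
  have hstat (z) : f1' (xstar z) = -mulE Bᵀ z :=
    eq_neg_of_add_eq_zero_left <|
      IsLocalMin.hasGradientAt_eq_zero (.of_forall (hxstar z)) ((hf1grad _).add_inner_const _)
  have hdual : mulE Bᵀ (y - y') = f1' (xstar y') - f1' (xstar y) := by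
    rw [mulE_sub, hstat, hstat, neg_sub_neg]
  have hg1mono : 0 ≤ ⟪g1' y - g1' y', y - y'⟫ :=
    hg1conv.inner_sub_nonneg_of_hasGradientAt (hg1grad y) (hg1grad y')
  have hBx : sigmaMin B ^ 2 / Lx * ‖y - y'‖ ^ 2 ≤ ⟪mulE B (xstar y') - mulE B (xstar y), y - y'⟫ :=
    calc sigmaMin B ^ 2 / Lx * ‖y - y'‖ ^ 2 = Lx⁻¹ * (sigmaMin B * ‖y - y'‖) ^ 2 := by ring
      _ ≤ Lx⁻¹ * ‖mulE Bᵀ (y - y')‖ ^ 2 := by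
        gcongr
        · exact mul_nonneg (sigmaMin_nonneg B) (norm_nonneg _)
        · exact sigmaMin_mul_norm_le B _
      _ = Lx⁻¹ * ‖f1' (xstar y') - f1' (xstar y)‖ ^ 2 := by rw [hdual]
      _ ≤ ⟪f1' (xstar y') - f1' (xstar y), xstar y' - xstar y⟫ :=
        hf1conv.inv_mul_sq_norm_gradient_sub_le_inner hL hf1grad hf1sm _ _
      _ = ⟪mulE B (xstar y') - mulE B (xstar y), y - y'⟫ := by
        rw [← mulE_sub, ← hdual, inner_mulE_transpose, real_inner_comm]
  rw [show g1' y - mulE B (xstar y) - (g1' y' - mulE B (xstar y'))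
      = (g1' y - g1' y') + (mulE B (xstar y') - mulE B (xstar y)) by abel, inner_add_left]
  linarith

/-- Lemma 2(ii): dual strong convexity from full row rank. -/
theorem dual_strongly_monotone_of_full_row_rank {dx dy : ℕ} (μx Lx : ℝ)
    (hμx : 0 < μx) (hLx : μx ≤ Lx)
    (f1 : EuclideanSpace ℝ (Fin dx) → ℝ)
    (f1' : EuclideanSpace ℝ (Fin dx) → EuclideanSpace ℝ (Fin dx))
    (hf1grad : ∀ x, HasGradientAt f1 (f1' x) x)
    (hf1sc : StrongConvex μx f1)
    (hf1sm : ∀ x x', ‖f1' x - f1' x'‖ ≤ Lx * ‖x - x'‖)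
    (g1 : EuclideanSpace ℝ (Fin dy) → ℝ)
    (g1' : EuclideanSpace ℝ (Fin dy) → EuclideanSpace ℝ (Fin dy))
    (hg1grad : ∀ y, HasGradientAt g1 (g1' y) y)
    (hg1conv : ConvexOn ℝ Set.univ g1)
    (B : Matrix (Fin dy) (Fin dx) ℝ)
    (hrank : 0 < sigmaMin B)
    (xstar : EuclideanSpace ℝ (Fin dy) → EuclideanSpace ℝ (Fin dx))
    (hxstar : ∀ y x, f1 (xstar y) + ⟪mulE Bᵀ y, xstar y⟫ ≤ f1 x + ⟪mulE Bᵀ y, x⟫) :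
    ∀ y y' : EuclideanSpace ℝ (Fin dy),
      (sigmaMin B ^ 2 / Lx) * ‖y - y'‖ ^ 2 ≤
        ⟪(g1' y - mulE B (xstar y)) - (g1' y' - mulE B (xstar y')), y - y'⟫ :=
  dual_strongly_monotone_of_full_row_rank_general μx Lx hμx hLx f1 f1' hf1grad hf1sc hf1sm g1 g1'
    hg1grad hg1conv B xstar hxstar
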